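/- arXiv:0902.4796 — 4 statements merged into one kernel-verified Lean document; each statement's English description precedes it below -/
import Mathlib

section
/- Suppose there exist a set A ∈ 𝓕 with P(A) > 0, a number ε ∈ (0, 1/2) and real numbers a, b with a ≤ ξ_p ≤ b such that for all ω ∈ A, the conditional distribution G₀(·; ω) puts more than ε mass on (a−ε, a] and more than ε mass on (b, b+ε] (i.e., G₀(a; ω) − G₀(a−ε; ω) > ε and G₀(b+ε; ω) − G₀(b; ω) > ε). Then P(G₀(ξ_p; ·) = 1) < p. -/
open MeasureTheory Set

/-! The conditional distribution function at the quantile has mean `F(ξ_p) = p`. It is `1` on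
`{G₀(ξ_p; ·) = 1}` and, by monotonicity, at least `ε` but (because of the mass above `b ≥ ξ_p`)
below `1` on `A`. Hence `p ≥ P(G₀(ξ_p; ·) = 1) + ε P(A) > P(G₀(ξ_p; ·) = 1)`. -/

section

variable {Ω : Type*} {m mΩ : MeasurableSpace Ω} {μ : Measure Ω}

lemma integral_eq_measureReal_of_ae_eq_condExp_indicator [IsFiniteMeasure μ] (hm : m ≤ mΩ)
    {s : Set Ω} (hs : MeasurableSet s) {g : Ω → ℝ} (hg : g =ᵐ[μ] μ[s.indicator 1 | m]) :
    ∫ ω, g ω ∂μ = μ.real s := by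
  rw [integral_congr_ae hg, integral_condExp hm, integral_indicator_one hs]

lemma measureReal_add_mul_le_integral [IsFiniteMeasure μ] {f : Ω → ℝ} (hf : Integrable f μ)
    (hf_nonneg : 0 ≤ᵐ[μ] f) {S A : Set Ω} (hS : MeasurableSet S) (hA : MeasurableSet A)
    (hSA : Disjoint S A) {ε : ℝ} (hfS : ∀ ω ∈ S, 1 ≤ f ω) (hfA : ∀ ω ∈ A, ε ≤ f ω) :
    μ.real S + ε * μ.real A ≤ ∫ ω, f ω ∂μ :=
  calc μ.real S + ε * μ.real A ≤ ∫ ω in S, f ω ∂μ + ∫ ω in A, f ω ∂μ := by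
        gcongr
        · simpa using setIntegral_ge_of_const_le_real hS (measure_ne_top μ S) hfS hf.integrableOn
        · exact setIntegral_ge_of_const_le_real hA (measure_ne_top μ A) hfA hf.integrableOn
    _ = ∫ ω in S ∪ A, f ω ∂μ := (setIntegral_union hSA hA hf.integrableOn hf.integrableOn).symm
    _ ≤ ∫ ω, f ω ∂μ := setIntegral_le_integral hf hf_nonneg

end

theorem stmt8_general {Ω : Type*} [mΩ : MeasurableSpace Ω] (μ : Measure Ω) [IsProbabilityMeasure μ]
    (X₀ : Ω → ℝ) (hX₀ : Measurable X₀)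
    (𝓒 : MeasurableSpace Ω) (h𝓒 : 𝓒 ≤ mΩ)
    (F : ℝ → ℝ) (hF : ∀ x, F x = (μ {ω | X₀ ω ≤ x}).toReal)
    (p : ℝ)
    (ξ : ℝ) (hFξ : F ξ = p)
    (G₀ : ℝ → Ω → ℝ) (hGmeas : ∀ y, Measurable (G₀ y))
    (hGver : ∀ y, G₀ y =ᵐ[μ] μ[(fun ω => if X₀ ω ≤ y then (1 : ℝ) else 0) | 𝓒])
    (hGmono : ∀ ω, Monotone (fun y => G₀ y ω))
    (hG01 : ∀ ω y, G₀ y ω ∈ Icc (0 : ℝ) 1)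
    (A : Set Ω) (hA : MeasurableSet A) (hPA : 0 < μ A)
    (ε : ℝ) (hε : ε ∈ Ioo (0 : ℝ) (1 / 2))
    (a b : ℝ) (haξ : a ≤ ξ) (hξb : ξ ≤ b)
    (hmass : ∀ ω ∈ A, ε < G₀ a ω - G₀ (a - ε) ω ∧ ε < G₀ (b + ε) ω - G₀ b ω) :
    (μ {ω | G₀ ξ ω = 1}).toReal < p := by
  have hG_meas : Measurable[mΩ] (G₀ ξ) := (hGmeas ξ).mono h𝓒 le_rfl
  have hG_int : Integrable (G₀ ξ) μ :=
    .of_bound hG_meas.aestronglyMeasurable 1 (ae_of_all _ fun ω => abs_le.2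
      ⟨by linarith [(hG01 ω ξ).1], (hG01 ω ξ).2⟩)
  have hG_mean : ∫ ω, G₀ ξ ω ∂μ = p := by
    rw [← hFξ, hF]
    refine integral_eq_measureReal_of_ae_eq_condExp_indicator h𝓒 (hX₀ measurableSet_Iic) ?_
    convert hGver ξ using 3 with ω
    simp [indicator]
  have hA_ge : ∀ ω ∈ A, ε ≤ G₀ ξ ω := fun ω hω => by
    linarith [hGmono ω haξ, (hmass ω hω).1, (hG01 ω (a - ε)).1]
  have hA_lt : ∀ ω ∈ A, G₀ ξ ω < 1 := fun ω hω => by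
    linarith [hGmono ω hξb, (hmass ω hω).2, (hG01 ω (b + ε)).2, hε.1]
  have hbound := measureReal_add_mul_le_integral hG_int (ae_of_all _ fun ω => (hG01 ω ξ).1)
    (hG_meas (measurableSet_singleton 1)) (h𝓒 A hA)
    (disjoint_left.2 fun ω hωS hωA => (hA_lt ω hωA).ne hωS) (fun ω hωS => hωS.ge) hA_ge
  have hA_pos : 0 < ε * μ.real A := mul_pos hε.1 (ENNReal.toReal_pos hPA.ne' (measure_ne_top μ A))
  rw [hG_mean] at hbound
  exact lt_of_lt_of_le (lt_add_of_pos_right _ hA_pos) hbound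

/-- Let `G₀(y;·)` be a regular conditional distribution function of `X₀` given `𝓒`
and `ξ_p` the `p`-th quantile of `F` with `F(ξ_p) = p`. If there are `A ∈ 𝓕` with `P(A) > 0`,
`ε ∈ (0,1/2)` and `a ≤ ξ_p ≤ b` such that on `A`, `G₀` puts more than `ε` mass on `(a−ε, a]`
and on `(b, b+ε]`, then `P(G₀(ξ_p;·) = 1) < p`. -/
theorem stmt8 {Ω : Type*} [mΩ : MeasurableSpace Ω] (μ : Measure Ω) [IsProbabilityMeasure μ]
    (X₀ : Ω → ℝ) (hX₀ : Measurable X₀)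
    (𝓒 : MeasurableSpace Ω) (h𝓒 : 𝓒 ≤ mΩ)
    (F : ℝ → ℝ) (hF : ∀ x, F x = (μ {ω | X₀ ω ≤ x}).toReal)
    (p : ℝ) (hp : p ∈ Ioo (0 : ℝ) 1)
    (ξ : ℝ) (hξ : ξ = sInf {x | p ≤ F x}) (hFξ : F ξ = p)
    (G₀ : ℝ → Ω → ℝ) (hGmeas : ∀ y, Measurable (G₀ y))
    (hGver : ∀ y, G₀ y =ᵐ[μ] μ[(fun ω => if X₀ ω ≤ y then (1 : ℝ) else 0) | 𝓒])
    (hGmono : ∀ ω, Monotone (fun y => G₀ y ω))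
    (hGrc : ∀ ω y, ContinuousWithinAt (fun y => G₀ y ω) (Ici y) y)
    (hG01 : ∀ ω y, G₀ y ω ∈ Icc (0 : ℝ) 1)
    (A : Set Ω) (hA : MeasurableSet A) (hPA : 0 < μ A)
    (ε : ℝ) (hε : ε ∈ Ioo (0 : ℝ) (1 / 2))
    (a b : ℝ) (haξ : a ≤ ξ) (hξb : ξ ≤ b)
    (hmass : ∀ ω ∈ A, ε < G₀ a ω - G₀ (a - ε) ω ∧ ε < G₀ (b + ε) ω - G₀ b ω) :
    (μ {ω | G₀ ξ ω = 1}).toReal < p :=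
  stmt8_general (mΩ := mΩ) μ X₀ hX₀ 𝓒 h𝓒 F hF p ξ hFξ G₀ hGmeas hGver hGmono hG01 A hA hPA ε hε a b
    haξ hξb hmass
end

section
/- Let {W_j : 1 ≤ j ≤ n} be square-integrable real random variables with E W_j = 0 for all j and with covariances depending only on the lag (E W_i W_j = r(|i − j|) for some function r), and suppose n⁻¹ Var(∑_{j=1}^n W_j) = 1. Then for any integer 1 ≤ m₁ ≤ n, |m₁⁻¹ Var(∑_{j=1}^{m₁} W_j) − 1| ≤ 2 ∑_{j=m₁+1}^{n−1} |E W₁ W_{j+1}| + (4/m₁) ∑_{j=1}^{n} j |E W₁ W_{j+1}|. -/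
/-!
Stationarity turns `∫ (W₁ + ⋯ + W_k)²` into the Toeplitz sum `∑_{i,j ≤ k} r |i - j|`, which equals
`k · (r 0 + 2 ∑_{d ≤ k} (1 - d/k) r d)`, a Fejér mean of the covariances. The hypothesis says that this
mean is `1` at `k = n`, so the claim compares the Fejér means at `m₁` and `n`: lags `d ≤ m₁` change
their weight by `d/n - d/m₁`, of size at most `d/m₁`, and lags `m₁ < d < n` enter only at `n`, with
weight at most `1` (the lag `d = n` has weight `0`).
-/

open MeasureTheory Set Finset

lemma sum_Icc_dist_succ (r : ℕ → ℝ) (k : ℕ) :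
    ∑ j ∈ Finset.Icc 1 k, r (Nat.dist j (k + 1)) = ∑ d ∈ Finset.Icc 1 k, r d := by
  refine sum_bij' (fun j _ ↦ k + 1 - j) (fun d _ ↦ k + 1 - d) ?_ ?_ ?_ ?_ ?_ <;>
    intro j hj <;> simp only [Finset.mem_Icc] at hj ⊢
  all_goals first | omega | rw [Nat.dist_eq_sub_of_le (by omega)]

lemma sum_Icc_sum_Icc_dist (r : ℕ → ℝ) (k : ℕ) :
    ∑ i ∈ Finset.Icc 1 k, ∑ j ∈ Finset.Icc 1 k, r (Nat.dist i j)
      = k * r 0 + 2 * ∑ d ∈ Finset.Icc 1 k, ((k : ℝ) - d) * r d := by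
  induction k with
  | zero => simp
  | succ k ih =>
    have hedge : ∑ j ∈ Finset.Icc 1 k, r (Nat.dist (k + 1) j) = ∑ d ∈ Finset.Icc 1 k, r d := by
      simp_rw [Nat.dist_comm (k + 1)]; exact sum_Icc_dist_succ r k
    have hweight : ∑ d ∈ Finset.Icc 1 k, ((k : ℝ) + 1 - d) * r d
        = ∑ d ∈ Finset.Icc 1 k, ((k : ℝ) - d) * r d + ∑ d ∈ Finset.Icc 1 k, r d := by
      rw [← sum_add_distrib]; exact sum_congr rfl fun _ _ ↦ by ring
    simp only [sum_Icc_succ_top (Nat.le_add_left 1 k), sum_add_distrib, ih, hedge,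
      sum_Icc_dist_succ, Nat.dist_self]
    push_cast
    rw [hweight]
    ring

noncomputable def fejerMean (r : ℕ → ℝ) (k : ℕ) : ℝ :=
  r 0 + 2 * ∑ d ∈ Finset.Icc 1 k, (1 - (d : ℝ) / k) * r d

lemma mul_fejerMean (r : ℕ → ℝ) (k : ℕ) :
    k * fejerMean r k = k * r 0 + 2 * ∑ d ∈ Finset.Icc 1 k, ((k : ℝ) - d) * r d := by
  rcases eq_or_ne k 0 with rfl | hk
  · simp
  have hk' : (k : ℝ) ≠ 0 := by exact_mod_cast hk
  rw [fejerMean, mul_add, mul_left_comm, mul_sum]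
  congr 2
  exact sum_congr rfl fun d _ ↦ by field_simp

lemma abs_sum_mul_le_sum_mul_abs {ι : Type*} (s : Finset ι) {w c : ι → ℝ} (r : ι → ℝ)
    (h : ∀ i ∈ s, |w i| ≤ c i) : |∑ i ∈ s, w i * r i| ≤ ∑ i ∈ s, c i * |r i| :=
  (abs_sum_le_sum_abs _ _).trans <| sum_le_sum fun i hi ↦ by
    rw [abs_mul]; exact mul_le_mul_of_nonneg_right (h i hi) (abs_nonneg _)

lemma sum_Icc_one_add_sum_Icc {M : Type*} [AddCommMonoid M] (f : ℕ → M) {m n : ℕ} (hmn : m ≤ n) :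
    ∑ d ∈ Finset.Icc 1 m, f d + ∑ d ∈ Finset.Icc (m + 1) n, f d = ∑ d ∈ Finset.Icc 1 n, f d := by
  simpa only [← Finset.Icc_add_one_left_eq_Ioc, zero_add] using
    sum_Ioc_consecutive f (Nat.zero_le m) hmn

lemma fejerMean_sub_fejerMean (r : ℕ → ℝ) {m n : ℕ} (hn : n ≠ 0) (hmn : m ≤ n) :
    fejerMean r m - fejerMean r n
      = 2 * (∑ d ∈ Finset.Icc 1 m, ((d : ℝ) / n - d / m) * r d
        - ∑ d ∈ Finset.Icc (m + 1) (n - 1), (1 - (d : ℝ) / n) * r d) := by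
  have htail : ∑ d ∈ Finset.Icc (m + 1) n, (1 - (d : ℝ) / n) * r d
      = ∑ d ∈ Finset.Icc (m + 1) (n - 1), (1 - (d : ℝ) / n) * r d := by
    refine (sum_subset (Icc_subset_Icc_right (Nat.sub_le n 1)) fun d hd hd' ↦ ?_).symm
    obtain rfl : d = n := by simp only [Finset.mem_Icc] at hd hd'; omega
    rw [div_self (by exact_mod_cast hn), sub_self, zero_mul]
  have hhead : ∑ d ∈ Finset.Icc 1 m, ((d : ℝ) / n - d / m) * r d
      = ∑ d ∈ Finset.Icc 1 m, (1 - (d : ℝ) / m) * r d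
        - ∑ d ∈ Finset.Icc 1 m, (1 - (d : ℝ) / n) * r d := by
    rw [← sum_sub_distrib]; exact sum_congr rfl fun _ _ ↦ by ring
  rw [fejerMean, fejerMean, ← sum_Icc_one_add_sum_Icc _ hmn, htail, hhead]
  ring

lemma abs_fejerMean_sub_le (r : ℕ → ℝ) {m n : ℕ} (hm : 1 ≤ m) (hmn : m ≤ n) :
    |fejerMean r m - fejerMean r n|
      ≤ 2 * ∑ d ∈ Finset.Icc (m + 1) (n - 1), |r d|
        + 2 / m * ∑ d ∈ Finset.Icc 1 m, (d : ℝ) * |r d| := by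
  have hm0 : (0 : ℝ) < m := by exact_mod_cast hm
  have hn0 : (0 : ℝ) < n := hm0.trans_le (by exact_mod_cast hmn)
  have hhead_weight : ∀ d ∈ Finset.Icc 1 m, |(d : ℝ) / n - d / m| ≤ d / m := by
    intro d _
    have : (d : ℝ) / n ≤ d / m := by gcongr
    rw [abs_le]; constructor <;> linarith [div_nonneg d.cast_nonneg hn0.le]
  have htail_weight : ∀ d ∈ Finset.Icc (m + 1) (n - 1), |1 - (d : ℝ) / n| ≤ 1 := by
    intro d hd
    have hdn : (d : ℝ) ≤ n := by simp only [Finset.mem_Icc] at hd; exact_mod_cast (by omega)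
    have : (d : ℝ) / n ≤ 1 := (div_le_one hn0).2 hdn
    rw [abs_le]; constructor <;> linarith [div_nonneg d.cast_nonneg hn0.le]
  calc |fejerMean r m - fejerMean r n|
      ≤ 2 * (|∑ d ∈ Finset.Icc 1 m, ((d : ℝ) / n - d / m) * r d|
        + |∑ d ∈ Finset.Icc (m + 1) (n - 1), (1 - (d : ℝ) / n) * r d|) := by
        rw [fejerMean_sub_fejerMean r (by omega) hmn, abs_mul, abs_two]
        gcongr
        exact abs_sub _ _
    _ ≤ 2 * (∑ d ∈ Finset.Icc 1 m, d / m * |r d|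
        + ∑ d ∈ Finset.Icc (m + 1) (n - 1), 1 * |r d|) := by
        gcongr
        · exact abs_sum_mul_le_sum_mul_abs _ _ hhead_weight
        · exact abs_sum_mul_le_sum_mul_abs _ _ htail_weight
    _ = _ := by simp only [one_mul, div_mul_eq_mul_div, ← sum_div]; ring

section Moments

variable {Ω : Type*} [MeasurableSpace Ω] {μ : Measure Ω}

lemma integral_sq_sum_eq_sum_sum_integral_mul {ι : Type*} (s : Finset ι) {W : ι → Ω → ℝ}
    (hW : ∀ i ∈ s, MemLp (W i) 2 μ) :
    ∫ ω, (∑ i ∈ s, W i ω) ^ 2 ∂μ = ∑ i ∈ s, ∑ j ∈ s, ∫ ω, W i ω * W j ω ∂μ := by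
  have hint : ∀ i ∈ s, ∀ j ∈ s, Integrable (fun ω ↦ W i ω * W j ω) μ :=
    fun i hi j hj ↦ (hW i hi).integrable_mul (hW j hj)
  simp_rw [sq, sum_mul_sum]
  rw [integral_finsetSum _ fun i hi ↦ integrable_finsetSum _ (hint i hi)]
  exact sum_congr rfl fun i hi ↦ integral_finsetSum _ (hint i hi)

lemma integral_sq_sum_Icc_eq_mul_fejerMean {W : ℕ → Ω → ℝ} {r : ℕ → ℝ} {k : ℕ}
    (hW : ∀ i ∈ Finset.Icc 1 k, MemLp (W i) 2 μ)
    (hcov : ∀ i ∈ Finset.Icc 1 k, ∀ j ∈ Finset.Icc 1 k,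
      ∫ ω, W i ω * W j ω ∂μ = r (Nat.dist i j)) :
    ∫ ω, (∑ j ∈ Finset.Icc 1 k, W j ω) ^ 2 ∂μ = k * fejerMean r k := by
  rw [integral_sq_sum_eq_sum_sum_integral_mul _ hW, mul_fejerMean, ← sum_Icc_sum_Icc_dist]
  exact sum_congr rfl fun i hi ↦ sum_congr rfl fun j hj ↦ hcov i hi j hj

end Moments

theorem stmt11_general {Ω : Type*} [MeasurableSpace Ω] (μ : Measure Ω)
    (n : ℕ) (W : ℕ → Ω → ℝ) (r : ℕ → ℝ)
    (hsq : ∀ i ∈ Finset.Icc 1 n, MemLp (W i) 2 μ)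
    (hcov : ∀ i ∈ Finset.Icc 1 n, ∀ j ∈ Finset.Icc 1 n,
      ∫ ω, W i ω * W j ω ∂μ = r (Nat.dist i j))
    (hvar : (n : ℝ)⁻¹ * ∫ ω, (∑ j ∈ Finset.Icc 1 n, W j ω) ^ 2 ∂μ = 1)
    (m₁ : ℕ) (hm₁ : 1 ≤ m₁) (hm₁n : m₁ ≤ n) :
    |(m₁ : ℝ)⁻¹ * (∫ ω, (∑ j ∈ Finset.Icc 1 m₁, W j ω) ^ 2 ∂μ) - 1|
      ≤ 2 * ∑ j ∈ Finset.Icc (m₁ + 1) (n - 1), |r j|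
        + (4 / (m₁ : ℝ)) * ∑ j ∈ Finset.Icc 1 n, (j : ℝ) * |r j| := by
  have hm0 : (m₁ : ℝ) ≠ 0 := by positivity
  have hn0 : (n : ℝ) ≠ 0 := by exact_mod_cast (by omega : n ≠ 0)
  have hsub : Finset.Icc 1 m₁ ⊆ Finset.Icc 1 n := Icc_subset_Icc_right hm₁n
  have hfejer_n : fejerMean r n = 1 := by
    rwa [integral_sq_sum_Icc_eq_mul_fejerMean hsq hcov, inv_mul_cancel_left₀ hn0] at hvar
  rw [integral_sq_sum_Icc_eq_mul_fejerMean (fun i hi ↦ hsq i (hsub hi))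
    (fun i hi j hj ↦ hcov i (hsub hi) j (hsub hj)), inv_mul_cancel_left₀ hm0, ← hfejer_n]
  calc |fejerMean r m₁ - fejerMean r n|
      ≤ 2 * ∑ d ∈ Finset.Icc (m₁ + 1) (n - 1), |r d|
        + 2 / m₁ * ∑ d ∈ Finset.Icc 1 m₁, (d : ℝ) * |r d| := abs_fejerMean_sub_le r hm₁ hm₁n
    _ ≤ _ := by
        gcongr
        norm_num

/-- For mean-zero, square-integrable `W₁,…,W_n` with second-order stationary
covariances `E W_i W_j = r(|i−j|)` and `n⁻¹ Var(∑_{j=1}^n W_j) = 1`, for any `1 ≤ m₁ ≤ n`,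
`|m₁⁻¹ Var(∑_{j=1}^{m₁} W_j) − 1| ≤ 2 ∑_{j=m₁+1}^{n−1} |E W₁ W_{j+1}|
  + (4/m₁) ∑_{j=1}^{n} j |E W₁ W_{j+1}|`, where for `j ≥ n` the covariance `E W₁ W_{j+1}`
is interpreted via the stationary extension `r(j)` of the covariance function. -/
theorem stmt11 {Ω : Type*} [MeasurableSpace Ω] (μ : Measure Ω) [IsProbabilityMeasure μ]
    (n : ℕ) (hn : 1 ≤ n) (W : ℕ → Ω → ℝ) (r : ℕ → ℝ)
    (hsq : ∀ i ∈ Finset.Icc 1 n, MemLp (W i) 2 μ)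
    (hmean : ∀ i ∈ Finset.Icc 1 n, ∫ ω, W i ω ∂μ = 0)
    (hcov : ∀ i ∈ Finset.Icc 1 n, ∀ j ∈ Finset.Icc 1 n,
      ∫ ω, W i ω * W j ω ∂μ = r (Nat.dist i j))
    (hvar : (n : ℝ)⁻¹ * ∫ ω, (∑ j ∈ Finset.Icc 1 n, W j ω) ^ 2 ∂μ = 1)
    (m₁ : ℕ) (hm₁ : 1 ≤ m₁) (hm₁n : m₁ ≤ n) :
    |(m₁ : ℝ)⁻¹ * (∫ ω, (∑ j ∈ Finset.Icc 1 m₁, W j ω) ^ 2 ∂μ) - 1|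
      ≤ 2 * ∑ j ∈ Finset.Icc (m₁ + 1) (n - 1), |r j|
        + (4 / (m₁ : ℝ)) * ∑ j ∈ Finset.Icc 1 n, (j : ℝ) * |r j| :=
  stmt11_general μ n W r hsq hcov hvar m₁ hm₁ hm₁n
end

section
/- For every t ∈ ℝ and every ε ∈ (0, 1/2), E|E(exp(ιt·1(X ≤ y)) | 𝓒)| = E[(1 − 4G(1 − G) sin²(t/2))^{1/2}] ≤ 1 − (1 − |Ψ_ε(t)|)·P(ε < G < 1 − ε), where |Ψ_ε(t)| = (1 − 4ε(1 − ε) sin²(t/2))^{1/2}. -/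
/-!
Write `Ψ_a(t) = a e^{ιt} + 1 - a`. Since `exp(ιt·1_B) = 1 + (e^{ιt} - 1)·1_B` is affine in the
indicator, its conditional expectation given `𝓒` is `Ψ_G(t)`, and
`|Ψ_a(t)|² = 1 - 4a(1 - a) sin²(t/2)` gives the equality. For the bound, `|Ψ_a(t)| ≤ 1` when
`a ∈ [0,1]` (a convex combination of unit complex numbers), while `|Ψ_a(t)| ≤ |Ψ_ε(t)|` on
`{ε < a < 1 - ε}`, where `a(1 - a) > ε(1 - ε)`.
-/

open MeasureTheory Set

noncomputable def bernoulliCharFun (a t : ℝ) : ℂ :=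
  a * Complex.exp (t * Complex.I) + (1 - a)

theorem norm_bernoulliCharFun (a t : ℝ) :
    ‖bernoulliCharFun a t‖ = √(1 - 4 * a * (1 - a) * Real.sin (t / 2) ^ 2) := by
  have hcos : Real.cos t = 1 - 2 * Real.sin (t / 2) ^ 2 := by
    rw [← Real.cos_two_mul_eq_one_sub, mul_div_cancel₀ t two_ne_zero]
  rw [bernoulliCharFun, Complex.exp_mul_I, ← Complex.ofReal_cos, ← Complex.ofReal_sin,
    Complex.norm_def, Complex.normSq_apply]
  congr 1
  simp only [Complex.add_re, Complex.add_im, Complex.mul_re, Complex.mul_im, Complex.sub_re,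
    Complex.sub_im, Complex.ofReal_re, Complex.ofReal_im, Complex.I_re, Complex.I_im,
    Complex.one_re, Complex.one_im]
  linear_combination a ^ 2 * Real.sin_sq_add_cos_sq t + 2 * a * (1 - a) * hcos

theorem norm_bernoulliCharFun_le_one {a : ℝ} (ha : a ∈ Icc 0 1) (t : ℝ) :
    ‖bernoulliCharFun a t‖ ≤ 1 := by
  calc ‖bernoulliCharFun a t‖
      ≤ ‖(a : ℂ) * Complex.exp (t * Complex.I)‖ + ‖((1 - a : ℝ) : ℂ)‖ := by
        rw [bernoulliCharFun, Complex.ofReal_sub, Complex.ofReal_one]; exact norm_add_le _ _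
    _ = 1 := by
        rw [norm_mul, Complex.norm_exp_ofReal_mul_I, Complex.norm_real, Complex.norm_real,
          Real.norm_of_nonneg ha.1, Real.norm_of_nonneg (sub_nonneg.2 ha.2)]
        ring

theorem norm_bernoulliCharFun_le_of_mem_Ioo {a ε : ℝ} (ha : a ∈ Ioo ε (1 - ε)) (t : ℝ) :
    ‖bernoulliCharFun a t‖ ≤ ‖bernoulliCharFun ε t‖ := by
  rw [norm_bernoulliCharFun, norm_bernoulliCharFun]
  refine Real.sqrt_le_sqrt ?_
  -- `a (1 - a) - ε (1 - ε) = (a - ε) (1 - ε - a)`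
  have := mul_nonneg (mul_pos (sub_pos.2 ha.1) (sub_pos.2 ha.2)).le (sq_nonneg (Real.sin (t / 2)))
  nlinarith

theorem continuous_norm_bernoulliCharFun (t : ℝ) :
    Continuous fun a => ‖bernoulliCharFun a t‖ := by
  unfold bernoulliCharFun; fun_prop

theorem integral_norm_bernoulliCharFun_le {Ω : Type*} {mΩ : MeasurableSpace Ω} {μ : Measure Ω}
    [IsProbabilityMeasure μ] {G : Ω → ℝ} (hG : AEMeasurable G μ)
    (hG01 : ∀ᵐ ω ∂μ, G ω ∈ Icc 0 1) (t ε : ℝ) :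
    ∫ ω, ‖bernoulliCharFun (G ω) t‖ ∂μ
      ≤ 1 - (1 - ‖bernoulliCharFun ε t‖) * (μ {ω | ε < G ω ∧ G ω < 1 - ε}).toReal := by
  set A := G ⁻¹' Ioo ε (1 - ε)
  have hA : NullMeasurableSet A μ := hG.nullMeasurableSet_preimage measurableSet_Ioo
  have hint : Integrable (fun ω => ‖bernoulliCharFun (G ω) t‖) μ :=
    (integrable_const 1).mono'
      ((continuous_norm_bernoulliCharFun t).comp_aestronglyMeasurable hG.aestronglyMeasurable)
      (hG01.mono fun ω h => by simpa using norm_bernoulliCharFun_le_one h t)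
  have hA_int : Integrable (A.indicator (1 : Ω → ℝ)) μ := (integrable_const 1).indicator₀ hA
  have hbound : ∀ᵐ ω ∂μ,
      ‖bernoulliCharFun (G ω) t‖ ≤ 1 - (1 - ‖bernoulliCharFun ε t‖) * A.indicator 1 ω := by
    filter_upwards [hG01] with ω hω
    by_cases hωA : ω ∈ A
    · simpa [indicator_of_mem hωA] using norm_bernoulliCharFun_le_of_mem_Ioo hωA t
    · simpa [indicator_of_notMem hωA] using norm_bernoulliCharFun_le_one hω t
  calc ∫ ω, ‖bernoulliCharFun (G ω) t‖ ∂μ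
      ≤ ∫ ω, (1 - (1 - ‖bernoulliCharFun ε t‖) * A.indicator 1 ω) ∂μ :=
        integral_mono_ae hint ((integrable_const 1).sub (hA_int.const_mul _)) hbound
    _ = 1 - (1 - ‖bernoulliCharFun ε t‖) * (μ A).toReal := by
        rw [integral_sub (integrable_const 1) (hA_int.const_mul _), integral_const_mul,
          integral_indicator₀ hA]
        simp [measureReal_def]

section CondExp

variable {Ω : Type*} {m m₀ : MeasurableSpace Ω} {μ : Measure Ω} [IsFiniteMeasure μ]

theorem condExp_mem_Icc_of_mem_Icc (hm : m ≤ m₀) {f : Ω → ℝ} (hf : Integrable f μ) {a b : ℝ}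
    (hab : ∀ᵐ ω ∂μ, f ω ∈ Icc a b) : ∀ᵐ ω ∂μ, μ[f | m] ω ∈ Icc a b := by
  have hlow := condExp_mono (m := m) (integrable_const a) hf (hab.mono fun _ h => h.1)
  have hup := condExp_mono (m := m) hf (integrable_const b) (hab.mono fun _ h => h.2)
  rw [condExp_const hm] at hlow hup
  filter_upwards [hlow, hup] with ω h₁ h₂ using ⟨h₁, h₂⟩

theorem integrable_ite_one_zero {p : Ω → Prop} [DecidablePred p] (hp : MeasurableSet {ω | p ω}) :
    Integrable (fun ω => if p ω then (1 : ℝ) else 0) μ :=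
  (integrable_const (1 : ℝ)).mono' (measurable_const.ite hp measurable_const).aestronglyMeasurable
    (ae_of_all _ fun ω => by by_cases h : p ω <;> simp [h])

theorem condExp_exp_mul_ite_eq_bernoulliCharFun (hm : m ≤ m₀) {p : Ω → Prop} [DecidablePred p]
    (hp : MeasurableSet {ω | p ω}) (t : ℝ) :
    μ[fun ω => Complex.exp (Complex.I * t * if p ω then 1 else 0) | m]
      =ᵐ[μ] fun ω => bernoulliCharFun (μ[fun ω => if p ω then (1 : ℝ) else 0 | m] ω) t := by
  set χ : Ω → ℝ := fun ω => if p ω then 1 else 0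
  let T : ℝ →L[ℝ] ℂ := (Complex.exp (t * Complex.I) - 1) • Complex.ofRealCLM
  have hT (a : ℝ) : T a + 1 = bernoulliCharFun a t := by
    simp only [T, bernoulliCharFun, FunLike.coe_smul, Pi.smul_apply, Complex.ofRealCLM_apply,
      smul_eq_mul]
    ring
  have hexp : (fun ω => Complex.exp (Complex.I * t * if p ω then 1 else 0))
      = fun ω => T (χ ω) + 1 := by
    funext ω
    rw [hT]
    by_cases h : p ω <;> simp [χ, h, bernoulliCharFun, mul_comm]
  rw [hexp]
  filter_upwards [(T.comp_condExp_add_const_comm hm (integrable_ite_one_zero hp) 1).symm] with ω h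
  rw [h, hT]

end CondExp

theorem stmt12_general {Ω : Type*} [mΩ : MeasurableSpace Ω] (μ : Measure Ω) [IsProbabilityMeasure μ]
    (X : Ω → ℝ) (hX : Measurable X)
    (𝓒 : MeasurableSpace Ω) (h𝓒 : 𝓒 ≤ mΩ)
    (y : ℝ) (G : Ω → ℝ)
    (hGver : G =ᵐ[μ] μ[(fun ω => if X ω ≤ y then (1 : ℝ) else 0) | 𝓒])
    (t : ℝ) (ε : ℝ) :
    (∫ ω, ‖
        ((μ[(fun ω => Complex.exp (Complex.I * (t : ℂ) *
            (if X ω ≤ y then (1 : ℂ) else 0))) | 𝓒]) ω)‖ ∂μ)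
      = ∫ ω, Real.sqrt (1 - 4 * G ω * (1 - G ω) * Real.sin (t / 2) ^ 2) ∂μ ∧
    (∫ ω, Real.sqrt (1 - 4 * G ω * (1 - G ω) * Real.sin (t / 2) ^ 2) ∂μ)
      ≤ 1 - (1 - Real.sqrt (1 - 4 * ε * (1 - ε) * Real.sin (t / 2) ^ 2))
          * (μ {ω | ε < G ω ∧ G ω < 1 - ε}).toReal := by
  have hset : MeasurableSet[mΩ] {ω | X ω ≤ y} := hX measurableSet_Iic
  have hcharFun := (condExp_exp_mul_ite_eq_bernoulliCharFun (μ := μ) h𝓒 hset t).trans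
    (hGver.symm.fun_comp (bernoulliCharFun · t))
  have hG01 : ∀ᵐ ω ∂μ, G ω ∈ Icc 0 1 := by
    have hind : ∀ᵐ ω ∂μ, (if X ω ≤ y then (1 : ℝ) else 0) ∈ Icc 0 1 :=
      ae_of_all _ fun ω => by by_cases h : X ω ≤ y <;> simp [h]
    filter_upwards [hGver, condExp_mem_Icc_of_mem_Icc h𝓒 (integrable_ite_one_zero hset) hind]
      with ω hGω hmem
    rwa [hGω]
  have hG_aemeas : AEMeasurable G μ := integrable_condExp.aemeasurable.congr hGver.symm
  simp_rw [← norm_bernoulliCharFun]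
  exact ⟨integral_congr_ae (hcharFun.fun_comp norm),
    integral_norm_bernoulliCharFun_le hG_aemeas hG01 t ε⟩

/-- Let `G` be a version of `P(X ≤ y | 𝓒)` with values in `[0,1]`. For every
`t ∈ ℝ` and every `ε ∈ (0,1/2)`,
`E|E(exp(ιt·1(X ≤ y)) | 𝓒)| = E[(1 − 4G(1 − G)sin²(t/2))^{1/2}]
  ≤ 1 − (1 − |Ψ_ε(t)|)·P(ε < G < 1 − ε)`,
where `|Ψ_ε(t)| = (1 − 4ε(1 − ε)sin²(t/2))^{1/2}`. -/
theorem stmt12 {Ω : Type*} [mΩ : MeasurableSpace Ω] (μ : Measure Ω) [IsProbabilityMeasure μ]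
    (X : Ω → ℝ) (hX : Measurable X)
    (𝓒 : MeasurableSpace Ω) (h𝓒 : 𝓒 ≤ mΩ)
    (y : ℝ) (G : Ω → ℝ) (hGmeas : Measurable G) (hG01 : ∀ ω, G ω ∈ Icc (0 : ℝ) 1)
    (hGver : G =ᵐ[μ] μ[(fun ω => if X ω ≤ y then (1 : ℝ) else 0) | 𝓒])
    (t : ℝ) (ε : ℝ) (hε : ε ∈ Ioo (0 : ℝ) (1 / 2)) :
    (∫ ω, ‖
        ((μ[(fun ω => Complex.exp (Complex.I * (t : ℂ) *
            (if X ω ≤ y then (1 : ℂ) else 0))) | 𝓒]) ω)‖ ∂μ)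
      = ∫ ω, Real.sqrt (1 - 4 * G ω * (1 - G ω) * Real.sin (t / 2) ^ 2) ∂μ ∧
    (∫ ω, Real.sqrt (1 - 4 * G ω * (1 - G ω) * Real.sin (t / 2) ^ 2) ∂μ)
      ≤ 1 - (1 - Real.sqrt (1 - 4 * ε * (1 - ε) * Real.sin (t / 2) ^ 2))
          * (μ {ω | ε < G ω ∧ G ω < 1 - ε}).toReal :=
  stmt12_general (mΩ := mΩ) μ X hX 𝓒 h𝓒 y G hGver t ε
end

section
/- If g(ξ_p) < p, then there exist δ₀ > 0, δ₁ ∈ (0, δ₀] and ε ∈ (0, δ₀/8) such that for all y with |y − ξ_p| < δ₁, P({ω : ε < G(y; ω) < 1 − ε}) ≥ δ₀/4. -/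
/-!
With `a := p - g ξ`, take `δ₀ = a`. As `y ↓ ξ`, monotonicity and right-continuity of `G` make the
sets `{1 - (y - ξ) ≤ G y}` decrease to `{G ξ = 1}`, of measure `p - a`; so some `y₀ ∈ (ξ, ξ + a/8)`
has `P(1 - ε ≤ G y₀) < p - a/2` with `ε := y₀ - ξ`, and monotonicity carries this to every `y ≤ y₀`.
On the other side `E[G y] = F y > p - a/8` near `ξ`, while `E[G y] ≤ ε + P(ε < G y)` since
`0 ≤ G ≤ 1`. Hence `P(ε < G y < 1 - ε) > (p - a/4) - (p - a/2) = a/4`.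
-/

open MeasureTheory Set Filter Topology

section

variable {Ω : Type*} {m0 : MeasurableSpace Ω} {μ : Measure Ω}

lemma integral_ae_eq_condExp_ite_le {m : MeasurableSpace Ω} [IsFiniteMeasure μ] (hm : m ≤ m0)
    {X : Ω → ℝ} (hX : Measurable[m0] X) {f : Ω → ℝ} {y : ℝ}
    (hf : f =ᵐ[μ] μ[fun ω => if X ω ≤ y then (1 : ℝ) else 0 | m]) :
    ∫ ω, f ω ∂μ = μ.real {ω | X ω ≤ y} := by
  rw [integral_congr_ae hf, integral_condExp hm,
    ← integral_indicator_one (measurableSet_le hX measurable_const)]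
  simp only [indicator_apply, mem_ofPred_eq, Pi.one_apply]

lemma integral_le_add_measureReal_lt [IsProbabilityMeasure μ] {f : Ω → ℝ} (hf : Measurable f)
    (hf01 : ∀ ω, f ω ∈ Icc (0 : ℝ) 1) {ε : ℝ} (hε : 0 ≤ ε) :
    ∫ ω, f ω ∂μ ≤ ε + μ.real {ω | ε < f ω} := by
  have hs : MeasurableSet {ω | ε < f ω} := measurableSet_lt measurable_const hf
  have hind : Integrable ({ω | ε < f ω}.indicator (1 : Ω → ℝ)) μ := (integrable_const 1).indicator hs
  have hbound : ∀ ω, f ω ≤ ε + {ω | ε < f ω}.indicator 1 ω := fun ω => by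
    by_cases h : ε < f ω
    · simpa [h] using (hf01 ω).2.trans (le_add_of_nonneg_left hε)
    · simpa [h] using not_lt.1 h
  have hfint : Integrable f μ :=
    (integrable_const 1).mono' hf.aestronglyMeasurable
      (.of_forall fun ω => by simpa [abs_of_nonneg (hf01 ω).1] using (hf01 ω).2)
  calc ∫ ω, f ω ∂μ ≤ ∫ ω, ε + {ω | ε < f ω}.indicator 1 ω ∂μ :=
        integral_mono hfint ((integrable_const ε).add hind) hbound
    _ = ε + μ.real {ω | ε < f ω} := by
        rw [integral_add (integrable_const ε) hind, integral_indicator_one hs]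
        simp

lemma integral_sub_le_measureReal_between [IsProbabilityMeasure μ] {f : Ω → ℝ}
    (hf : Measurable f) (hf01 : ∀ ω, f ω ∈ Icc (0 : ℝ) 1) {ε : ℝ} (hε : 0 ≤ ε) :
    ∫ ω, f ω ∂μ - ε - μ.real {ω | 1 - ε ≤ f ω} ≤ μ.real {ω | ε < f ω ∧ f ω < 1 - ε} := by
  have hcover : {ω | ε < f ω} ⊆ {ω | ε < f ω ∧ f ω < 1 - ε} ∪ {ω | 1 - ε ≤ f ω} :=
    fun ω hω => (lt_or_ge (f ω) (1 - ε)).imp (⟨hω, ·⟩) id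
  have := (measureReal_mono hcover).trans (measureReal_union_le (μ := μ) _ _)
  linarith [integral_le_add_measureReal_lt (μ := μ) hf hf01 hε]

lemma tendsto_measureReal_setOf_le_nhdsGT [IsFiniteMeasure μ] {G : ℝ → Ω → ℝ}
    (hG : ∀ y, Measurable (G y)) (hmono : ∀ ω, Monotone (G · ω)) {ξ : ℝ}
    (hrc : ∀ ω, ContinuousWithinAt (G · ω) (Ici ξ) ξ) (c : ℝ) :
    Tendsto (fun y => μ.real {ω | c - (y - ξ) ≤ G y ω}) (𝓝[>] ξ)
      (𝓝 (μ.real {ω | c ≤ G ξ ω})) := by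
  have hinter : ⋂ y > ξ, {ω | c - (y - ξ) ≤ G y ω} = {ω | c ≤ G ξ ω} := by
    ext ω
    simp only [mem_iInter, mem_ofPred_eq]
    refine ⟨fun h => ?_, fun h y hy => ?_⟩
    · have hlim : Tendsto (fun y => G y ω + (y - ξ)) (𝓝[>] ξ) (𝓝 (G ξ ω + (ξ - ξ))) :=
        ((hrc ω).mono Ioi_subset_Ici_self).tendsto.add
          ((continuous_id.sub continuous_const).continuousWithinAt.tendsto)
      refine ge_of_tendsto (by simpa using hlim) ?_
      filter_upwards [self_mem_nhdsWithin] with y hy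
      linarith [h y hy]
    · linarith [hmono ω hy.le]
  have hmeas : Tendsto (fun y => μ {ω | c - (y - ξ) ≤ G y ω}) (𝓝[>] ξ)
      (𝓝 (μ {ω | c ≤ G ξ ω})) := by
    rw [← hinter]
    refine tendsto_measure_biInter_gt
      (fun y _ => (measurableSet_le measurable_const (hG y)).nullMeasurableSet)
      (fun y z _ hyz ω hω => ?_) ⟨ξ + 1, by simp, measure_ne_top μ _⟩
    simp only [mem_ofPred_eq] at hω ⊢
    linarith [hmono ω hyz]
  exact (ENNReal.tendsto_toReal (measure_ne_top μ _)).comp hmeas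

end

theorem stmt13_general {Ω : Type*} [mΩ : MeasurableSpace Ω] (μ : Measure Ω) [IsProbabilityMeasure μ]
    (X : Ω → ℝ) (hX : Measurable X)
    (𝓒 : MeasurableSpace Ω) (h𝓒 : 𝓒 ≤ mΩ)
    (F : ℝ → ℝ) (hF : ∀ x, F x = (μ {ω | X ω ≤ x}).toReal)
    (p : ℝ)
    (ξ : ℝ)
    (hFcont : ContinuousAt F ξ) (hFξ : F ξ = p)
    (G : ℝ → Ω → ℝ) (hGmeas : ∀ y, Measurable (G y))
    (hGver : ∀ y, G y =ᵐ[μ] μ[(fun ω => if X ω ≤ y then (1 : ℝ) else 0) | 𝓒])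
    (hGmono : ∀ ω, Monotone (fun y => G y ω))
    (hGrc : ∀ ω y, ContinuousWithinAt (fun y => G y ω) (Ici y) y)
    (hG01 : ∀ ω y, G y ω ∈ Icc (0 : ℝ) 1)
    (g : ℝ → ℝ) (hg : ∀ y, g y = (μ {ω | G y ω = 1}).toReal)
    (hgξ : g ξ < p) :
    ∃ δ₀ > (0 : ℝ), ∃ δ₁ ∈ Ioc (0 : ℝ) δ₀, ∃ ε ∈ Ioo (0 : ℝ) (δ₀ / 8),
      ∀ y : ℝ, |y - ξ| < δ₁ →
        δ₀ / 4 ≤ (μ {ω | ε < G y ω ∧ G y ω < 1 - ε}).toReal := by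
  -- `hGmeas` was elaborated with `𝓒`, the last `MeasurableSpace Ω` instance in scope.
  have hGmeas' : ∀ y, Measurable[mΩ] (G y) := fun y => (hGmeas y).mono h𝓒 le_rfl
  have hGint (y : ℝ) : ∫ ω, G y ω ∂μ = F y := by
    rw [integral_ae_eq_condExp_ite_le h𝓒 hX (hGver y), hF, measureReal_def]
  set a := p - g ξ
  have ha : 0 < a := by linarith
  have hξtail : μ.real {ω | 1 ≤ G ξ ω} < p - a / 2 := by
    have : {ω | 1 ≤ G ξ ω} = {ω | G ξ ω = 1} := by
      ext ω; simpa using ⟨fun h => le_antisymm (hG01 ω ξ).2 h, ge_of_eq⟩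
    rw [this, measureReal_def, ← hg]
    linarith
  obtain ⟨y₀, hy₀tail, hξy₀, hy₀a⟩ :=
    ((tendsto_measureReal_setOf_le_nhdsGT hGmeas' hGmono (fun ω => hGrc ω ξ) 1).eventually
      (gt_mem_nhds hξtail)).and (Ioo_mem_nhdsGT (show ξ < ξ + a / 8 by linarith)) |>.exists
  obtain ⟨δ, hδ, hFδ⟩ := Metric.eventually_nhds_iff.1
    (hFcont.eventually (lt_mem_nhds (show p - a / 8 < F ξ by linarith)))
  refine ⟨a, ha, min δ (y₀ - ξ), ⟨lt_min hδ (sub_pos.2 hξy₀), ?_⟩, y₀ - ξ,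
    ⟨sub_pos.2 hξy₀, by linarith⟩, fun y hy => ?_⟩
  · linarith [min_le_right δ (y₀ - ξ)]
  have hFy := hFδ ((Real.dist_eq y ξ).trans_lt (hy.trans_le (min_le_left _ _)))
  have hyy₀ : y ≤ y₀ := by linarith [(abs_lt.1 (hy.trans_le (min_le_right _ _))).2]
  have htail : μ.real {ω | 1 - (y₀ - ξ) ≤ G y ω} ≤ μ.real {ω | 1 - (y₀ - ξ) ≤ G y₀ ω} :=
    measureReal_mono fun ω hω => le_trans hω (hGmono ω hyy₀)
  have hbetween :=
    integral_sub_le_measureReal_between (μ := μ) (hGmeas' y) (hG01 · y) (sub_pos.2 hξy₀).le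
  rw [hGint] at hbetween
  rw [← measureReal_def]
  linarith

/-- Let `G(y;·)` be a regular conditional distribution function of `X₁` given
`𝓒`, `g(y) = P(G(y;·) = 1)`, and `ξ_p` the `p`-th quantile of `F`, `F` continuous at `ξ_p`
(so `F(ξ_p) = p`). If `g(ξ_p) < p`, then there exist `δ₀ > 0`, `δ₁ ∈ (0, δ₀]` and
`ε ∈ (0, δ₀/8)` such that for all `y` with `|y − ξ_p| < δ₁`,
`P(ε < G(y;·) < 1 − ε) ≥ δ₀/4`. -/
theorem stmt13 {Ω : Type*} [mΩ : MeasurableSpace Ω] (μ : Measure Ω) [IsProbabilityMeasure μ]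
    (X : Ω → ℝ) (hX : Measurable X)
    (𝓒 : MeasurableSpace Ω) (h𝓒 : 𝓒 ≤ mΩ)
    (F : ℝ → ℝ) (hF : ∀ x, F x = (μ {ω | X ω ≤ x}).toReal)
    (p : ℝ) (hp : p ∈ Ioo (0 : ℝ) 1)
    (ξ : ℝ) (hξ : ξ = sInf {x | p ≤ F x})
    (hFcont : ContinuousAt F ξ) (hFξ : F ξ = p)
    (G : ℝ → Ω → ℝ) (hGmeas : ∀ y, Measurable (G y))
    (hGver : ∀ y, G y =ᵐ[μ] μ[(fun ω => if X ω ≤ y then (1 : ℝ) else 0) | 𝓒])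
    (hGmono : ∀ ω, Monotone (fun y => G y ω))
    (hGrc : ∀ ω y, ContinuousWithinAt (fun y => G y ω) (Ici y) y)
    (hG01 : ∀ ω y, G y ω ∈ Icc (0 : ℝ) 1)
    (g : ℝ → ℝ) (hg : ∀ y, g y = (μ {ω | G y ω = 1}).toReal)
    (hgξ : g ξ < p) :
    ∃ δ₀ > (0 : ℝ), ∃ δ₁ ∈ Ioc (0 : ℝ) δ₀, ∃ ε ∈ Ioo (0 : ℝ) (δ₀ / 8),
      ∀ y : ℝ, |y - ξ| < δ₁ →
        δ₀ / 4 ≤ (μ {ω | ε < G y ω ∧ G y ω < 1 - ε}).toReal :=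
  stmt13_general (mΩ := mΩ) μ X hX 𝓒 h𝓒 F hF p ξ hFcont hFξ G hGmeas hGver hGmono hGrc hG01 g hg hgξ
end
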